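/- (Lower bound, Many-to-Many, maximum error.) Let K ≥ 2, let X be a countable type, and for each pair i, k ∈ {0,…,K−1} let D_{i,k} be a probability distribution (PMF) on X (the marginal of the parallel corpus for translating language i to language k over source sentences) and f_{i,k} : X → Y a ground-truth translator into a countable type Y. Let Z be a measurable space and g : X → Z satisfy, for every k and every i ≠ j, d_TV(g♯D_{i,k}, g♯D_{j,k}) ≤ ε. Then for every measurable decoder h : Z → Y, max_{i,k} Pr_{X∼D_{i,k}}(h(g(X)) ≠ f_{i,k}(X)) ≥ (1/2)·max_{k} max_{i≠j} d_TV(f_{i,k}♯D_{i,k}, f_{j,k}♯D_{j,k}) − ε/2. -/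

import Mathlib

/-!
Compose the encoder `g` with the decoder `h`. For a fixed target `k` and sources `i ≠ j`,
the triangle inequality for total variation gives
`d(f_ik♯D_ik, f_jk♯D_jk) ≤ d(f_ik♯D_ik, (h∘g)♯D_ik) + d((h∘g)♯D_ik, (h∘g)♯D_jk)`
`  + d((h∘g)♯D_jk, f_jk♯D_jk)`.
Two pushforwards of one measure differ by at most the mass where the maps disagree, so the
outer terms are the translation errors of `h ∘ g`, and pushing forward along `h` does not
increase total variation, so the middle term is at most `ε`.
-/

open MeasureTheory

/-- Total variation distance between two measures: supremum over measurable events of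
the absolute difference of the probabilities. -/
noncomputable def tvDist {α : Type*} [MeasurableSpace α] (P Q : Measure α) : ℝ :=
  ⨆ E : {s : Set α // MeasurableSet s}, |(P E.1).toReal - (Q E.1).toReal|

section TotalVariation

variable {α β : Type*} [MeasurableSpace α]

lemma measureReal_preimage_le_add_measureReal_ne (μ : Measure α) [IsFiniteMeasure μ]
    (u v : α → β) (s : Set β) :
    μ.real (u ⁻¹' s) ≤ μ.real (v ⁻¹' s) + μ.real {x | u x ≠ v x} := by
  have hcover : u ⁻¹' s ⊆ v ⁻¹' s ∪ {x | u x ≠ v x} := fun x hx => by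
    by_cases huv : u x = v x
    · exact Or.inl (show v x ∈ s from huv ▸ hx)
    · exact Or.inr huv
  exact (measureReal_mono hcover).trans (measureReal_union_le _ _)

variable [MeasurableSpace β]

lemma tvDist_le_of_forall {P Q : Measure α} {c : ℝ}
    (h : ∀ s, MeasurableSet s → |P.real s - Q.real s| ≤ c) : tvDist P Q ≤ c :=
  have : Nonempty {s : Set α // MeasurableSet s} := ⟨⟨∅, .empty⟩⟩
  ciSup_le fun s => h s.1 s.2

lemma abs_measureReal_sub_le_tvDist (P Q : Measure α) [IsFiniteMeasure P] [IsFiniteMeasure Q]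
    {s : Set α} (hs : MeasurableSet s) : |P.real s - Q.real s| ≤ tvDist P Q := by
  refine le_ciSup (f := fun E : {s : Set α // MeasurableSet s} => |P.real E.1 - Q.real E.1|)
    ⟨P.real .univ + Q.real .univ, ?_⟩ ⟨s, hs⟩
  rintro _ ⟨E, rfl⟩
  have hP : P.real E.1 ≤ P.real .univ := measureReal_mono (Set.subset_univ _)
  have hQ : Q.real E.1 ≤ Q.real .univ := measureReal_mono (Set.subset_univ _)
  rw [abs_sub_le_iff]
  constructor <;> linarith [measureReal_nonneg (μ := P) (s := E.1),
    measureReal_nonneg (μ := Q) (s := E.1)]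

lemma tvDist_triangle (P Q R : Measure α) [IsFiniteMeasure P] [IsFiniteMeasure Q]
    [IsFiniteMeasure R] : tvDist P R ≤ tvDist P Q + tvDist Q R :=
  tvDist_le_of_forall fun _ hs => (abs_sub_le _ _ _).trans <|
    add_le_add (abs_measureReal_sub_le_tvDist P Q hs) (abs_measureReal_sub_le_tvDist Q R hs)

lemma tvDist_map_le (P Q : Measure α) [IsFiniteMeasure P] [IsFiniteMeasure Q] {φ : α → β}
    (hφ : Measurable φ) : tvDist (P.map φ) (Q.map φ) ≤ tvDist P Q :=
  tvDist_le_of_forall fun _ hs => by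
    rw [map_measureReal_apply hφ hs, map_measureReal_apply hφ hs]
    exact abs_measureReal_sub_le_tvDist P Q (hφ hs)

lemma tvDist_map_map_le_measureReal_ne (μ : Measure α) [IsFiniteMeasure μ] {u v : α → β}
    (hu : Measurable u) (hv : Measurable v) :
    tvDist (μ.map u) (μ.map v) ≤ μ.real {x | u x ≠ v x} :=
  tvDist_le_of_forall fun s hs => by
    rw [map_measureReal_apply hu hs, map_measureReal_apply hv hs, abs_sub_le_iff]
    have hvu := measureReal_preimage_le_add_measureReal_ne μ v u s
    simp only [ne_comm (a := v _)] at hvu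
    constructor <;> linarith [measureReal_preimage_le_add_measureReal_ne μ u v s]

lemma tvDist_map_le_measureReal_ne_add (μ ν : Measure α) [IsFiniteMeasure μ]
    [IsFiniteMeasure ν] {u v φ : α → β} (hu : Measurable u) (hv : Measurable v)
    (hφ : Measurable φ) :
    tvDist (μ.map u) (ν.map v) ≤
      μ.real {x | φ x ≠ u x} + tvDist (μ.map φ) (ν.map φ) + ν.real {x | φ x ≠ v x} := by
  have hu_φ : tvDist (μ.map u) (μ.map φ) ≤ μ.real {x | φ x ≠ u x} := by
    simpa only [ne_comm] using tvDist_map_map_le_measureReal_ne μ hu hφ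
  have hφ_v := tvDist_map_map_le_measureReal_ne ν hφ hv
  linarith [tvDist_triangle (μ.map u) (μ.map φ) (ν.map v),
    tvDist_triangle (μ.map φ) (ν.map φ) (ν.map v)]

end TotalVariation

theorem many_to_many_max_lower_bound_general {X Y Z : Type*}
    [MeasurableSpace X] [DiscreteMeasurableSpace X]
    [MeasurableSpace Y]
    [MeasurableSpace Z]
    (K : ℕ) (hK : 2 ≤ K)
    (D : Fin K → Fin K → PMF X) (f : Fin K → Fin K → X → Y) (g : X → Z) (ε : ℝ)
    (hg : ∀ k i j, i ≠ j →
      tvDist ((D i k).map g).toMeasure ((D j k).map g).toMeasure ≤ ε)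
    {h : Z → Y} (hh : Measurable h) :
    (⨆ p : Fin K × Fin K,
        ((D p.1 p.2).toMeasure {x | h (g x) ≠ f p.1 p.2 x}).toReal)
      ≥ (1 / 2) * (⨆ q : {q : Fin K × Fin K × Fin K // q.2.1 ≠ q.2.2},
          tvDist ((D q.1.2.1 q.1.1).map (f q.1.2.1 q.1.1)).toMeasure
            ((D q.1.2.2 q.1.1).map (f q.1.2.2 q.1.1)).toMeasure) - ε / 2 := by
  set err : Fin K × Fin K → ℝ :=
    fun p => ((D p.1 p.2).toMeasure {x | h (g x) ≠ f p.1 p.2 x}).toReal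
  have err_le_iSup (i k : Fin K) : err (i, k) ≤ ⨆ p, err p :=
    le_ciSup (Set.finite_range err).bddAbove (i, k)
  have key (k i j : Fin K) (hij : i ≠ j) :
      tvDist ((D i k).map (f i k)).toMeasure ((D j k).map (f j k)).toMeasure
        ≤ err (i, k) + ε + err (j, k) := by
    have hpred : tvDist ((D i k).toMeasure.map (h ∘ g)) ((D j k).toMeasure.map (h ∘ g)) ≤ ε := by
      rw [← Measure.map_map hh .of_discrete, ← Measure.map_map hh .of_discrete,
        PMF.toMeasure_map g _ .of_discrete, PMF.toMeasure_map g _ .of_discrete]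
      exact (tvDist_map_le _ _ hh).trans (hg k i j hij)
    rw [← PMF.toMeasure_map (f i k) _ .of_discrete, ← PMF.toMeasure_map (f j k) _ .of_discrete]
    exact (tvDist_map_le_measureReal_ne_add _ _ .of_discrete .of_discrete
      (hh.comp .of_discrete)).trans (by gcongr <;> exact le_rfl)
  have : Nonempty {q : Fin K × Fin K × Fin K // q.2.1 ≠ q.2.2} :=
    ⟨⟨(⟨0, by omega⟩, ⟨0, by omega⟩, ⟨1, by omega⟩), by simp [Fin.ext_iff]⟩⟩
  have hsup := ciSup_le fun q : {q : Fin K × Fin K × Fin K // q.2.1 ≠ q.2.2} =>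
    (key _ _ _ q.2).trans (show _ ≤ 2 * (⨆ p, err p) + ε by
      linarith [err_le_iSup q.1.2.1 q.1.1, err_le_iSup q.1.2.2 q.1.1])
  linarith

/-- Lower bound, Many-to-Many, maximum error. Here `D i k` is the marginal over source
sentences of the parallel corpus for translating language `i` into language `k`, and
`f i k` is the corresponding ground-truth translator. If `g` is an `ε`-universal language
mapping (pushforwards of `D i k` and `D j k` under `g` are within `ε` for every target
`k` and sources `i ≠ j`), then for any measurable decoder `h`, the maximum translation
error is at least half the maximum (over targets `k` and sources `i ≠ j`) of the total
variation distance of the target marginals, minus `ε / 2`. -/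
theorem many_to_many_max_lower_bound {X Y Z : Type*}
    [Countable X] [MeasurableSpace X] [DiscreteMeasurableSpace X]
    [Countable Y] [MeasurableSpace Y] [DiscreteMeasurableSpace Y]
    [MeasurableSpace Z]
    (K : ℕ) (hK : 2 ≤ K)
    (D : Fin K → Fin K → PMF X) (f : Fin K → Fin K → X → Y) (g : X → Z) (ε : ℝ)
    (hg : ∀ k i j, i ≠ j →
      tvDist ((D i k).map g).toMeasure ((D j k).map g).toMeasure ≤ ε)
    {h : Z → Y} (hh : Measurable h) :
    (⨆ p : Fin K × Fin K,
        ((D p.1 p.2).toMeasure {x | h (g x) ≠ f p.1 p.2 x}).toReal)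
      ≥ (1 / 2) * (⨆ q : {q : Fin K × Fin K × Fin K // q.2.1 ≠ q.2.2},
          tvDist ((D q.1.2.1 q.1.1).map (f q.1.2.1 q.1.1)).toMeasure
            ((D q.1.2.2 q.1.1).map (f q.1.2.2 q.1.1)).toMeasure) - ε / 2 :=
  many_to_many_max_lower_bound_general K hK D f g ε hg hh
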